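/- In the collapse S* of a quantum modal structure S with respect to an admissible set Σ, for every atomic formula p the set ρ*(p) is R_Q*-closed: [i] ∈ ρ*(p) if and only if for all [j] ∈ W*, R_Q*([i],[j]) implies there exists [k] ∈ W* with R_Q*([j],[k]) and [k] ∈ ρ*(p). -/
import Mathlib


/-- Formulas of quantum modal logic: atoms, conjunction, negation, box. -/
inductive Formula : Type
  | atom : ℕ → Formula
  | and  : Formula → Formula → Formula
  | neg  : Formula → Formula
  | box  : Formula → Formula
deriving DecidableEq

/-- A set `X ⊆ W` is `R_Q`-closed. -/
def RQClosed {W : Type} (RQ : W → W → Prop) (X : Set W) : Prop :=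
  ∀ i : W, i ∈ X ↔ ∀ j : W, RQ i j → ∃ k : W, RQ j k ∧ k ∈ X

/-- A quantum modal structure `⟨W, R_Q, R_M, ρ⟩`. -/
structure QMS where
  W : Type
  nonempty : Nonempty W
  RQ : W → W → Prop
  RM : W → W → Prop
  val : ℕ → Set W
  RQ_refl : ∀ i, RQ i i
  RQ_symm : ∀ i j, RQ i j → RQ j i
  RM_forced : ∀ i l, RM i l → ∀ j, RQ i j → RM j l
  val_closed : ∀ p, RQClosed RQ (val p)

/-- Truth of a formula at a world, relative to relations `RQ`, `RM` and valuation `v`. -/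
def TruthOn {W : Type} (RQ RM : W → W → Prop) (v : ℕ → Set W) : W → Formula → Prop
  | i, .atom p  => i ∈ v p
  | i, .and α β => TruthOn RQ RM v i α ∧ TruthOn RQ RM v i β
  | i, .neg α   => ∀ j, RQ i j → ¬ TruthOn RQ RM v j α
  | i, .box α   => ∀ l, RM i l → TruthOn RQ RM v l α

/-- Truth at a world of a quantum modal structure. -/
def Truth (S : QMS) : S.W → Formula → Prop := TruthOn S.RQ S.RM S.val

/-- A set of formulas is admissible: closed under subformulas and containing `¬p`
whenever it contains an atomic formula `p`. -/
def Admissible (Sg : Set Formula) : Prop :=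
  (∀ α β, Formula.and α β ∈ Sg → α ∈ Sg ∧ β ∈ Sg) ∧
  (∀ α, Formula.neg α ∈ Sg → α ∈ Sg) ∧
  (∀ α, Formula.box α ∈ Sg → α ∈ Sg) ∧
  (∀ p, Formula.atom p ∈ Sg → Formula.neg (Formula.atom p) ∈ Sg)

/-- `i ∼ j` : worlds `i` and `j` satisfy the same formulas of `Sg`. -/
def Sim (S : QMS) (Sg : Set Formula) (i j : S.W) : Prop :=
  ∀ α ∈ Sg, (Truth S i α ↔ Truth S j α)

/-- The setoid on worlds induced by an admissible set. -/
def worldSetoid (S : QMS) (Sg : Set Formula) : Setoid S.W where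
  r := Sim S Sg
  iseqv := ⟨fun _ _ _ => Iff.rfl,
            fun h α hα => (h α hα).symm,
            fun h1 h2 α hα => (h1 α hα).trans (h2 α hα)⟩

/-- The set of worlds `W* = W/∼` of the collapse. -/
def CW (S : QMS) (Sg : Set Formula) : Type := Quotient (worldSetoid S Sg)

/-- The equivalence class `[i]` of a world `i`. -/
def cls (S : QMS) (Sg : Set Formula) (i : S.W) : CW S Sg :=
  Quotient.mk (worldSetoid S Sg) i

/-- `R_Q*([i],[j])` iff there exist `i' ∼ i` and `j' ∼ j` with `R_Q(i',j')`. -/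
def CRQ (S : QMS) (Sg : Set Formula) (x y : CW S Sg) : Prop :=
  ∃ i j : S.W, cls S Sg i = x ∧ cls S Sg j = y ∧ S.RQ i j

/-- `R_M*([i],[l])` iff for every `□α ∈ Σ`, `i ⊨ □α` implies `l ⊨ α`. -/
def CRM (S : QMS) (Sg : Set Formula) (x y : CW S Sg) : Prop :=
  ∃ i l : S.W, cls S Sg i = x ∧ cls S Sg l = y ∧
    ∀ α, Formula.box α ∈ Sg → Truth S i (Formula.box α) → Truth S l α

/-- `ρ*(p) = {[i] : i ∈ ρ(p)}` if `p ∈ Σ`, and `ρ*(p) = ∅` otherwise. -/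
def CVal (S : QMS) (Sg : Set Formula) (p : ℕ) : Set (CW S Sg) :=
  {x | Formula.atom p ∈ Sg ∧ ∃ i : S.W, cls S Sg i = x ∧ i ∈ S.val p}

/-- Truth at a world of the collapse `S*`, defined by the same truth clauses
using `R_Q*`, `R_M*`, `ρ*`. -/
def CTruth (S : QMS) (Sg : Set Formula) : CW S Sg → Formula → Prop :=
  TruthOn (CRQ S Sg) (CRM S Sg) (CVal S Sg)

/-- Derivability of sequents `Γ ⊢ Δ` in the sequent calculus of QML. -/
inductive Deriv : Set Formula → Set Formula → Prop
  | ax (α : Formula) : Deriv {α} {α}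
  | mem (Γ : Set Formula) (α : Formula) :
      Deriv Γ {Formula.box α, Formula.neg (Formula.box α)}
  | wkn (Γ Δ P Q : Set Formula) : Deriv Γ Δ → Deriv (P ∪ Γ) (Δ ∪ Q)
  | cut (Γ₁ Γ₂ Δ₁ Δ₂ : Set Formula) (α : Formula) :
      Deriv Γ₁ (insert α Δ₁) → Deriv (insert α Γ₂) Δ₂ → Deriv (Γ₁ ∪ Γ₂) (Δ₁ ∪ Δ₂)
  | andl1 (α β : Formula) (Γ Δ : Set Formula) :
      Deriv (insert α Γ) Δ → Deriv (insert (Formula.and α β) Γ) Δ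
  | andl2 (α β : Formula) (Γ Δ : Set Formula) :
      Deriv (insert β Γ) Δ → Deriv (insert (Formula.and α β) Γ) Δ
  | andr (α β : Formula) (Γ Δ : Set Formula) :
      Deriv Γ (insert α Δ) → Deriv Γ (insert β Δ) → Deriv Γ (insert (Formula.and α β) Δ)
  | negl (α : Formula) (Γ Δ : Set Formula) :
      Deriv Γ (insert α Δ) → Deriv (insert (Formula.neg α) Γ) Δ
  | negr (α : Formula) (Δ : Set Formula) :
      Deriv {α} Δ → Deriv (Formula.neg '' Δ) {Formula.neg α}
  | negnegl (α : Formula) (Γ Δ : Set Formula) :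
      Deriv (insert α Γ) Δ → Deriv (insert (Formula.neg (Formula.neg α)) Γ) Δ
  | negnegr (α : Formula) (Γ Δ : Set Formula) :
      Deriv Γ (insert α Δ) → Deriv Γ (insert (Formula.neg (Formula.neg α)) Δ)
  | k (α : Formula) (Γ : Set Formula) :
      Deriv Γ {α} → Deriv (Formula.box '' Γ) {Formula.box α}

/-- In the collapse `S*`, for every atomic formula `p` the set
`ρ*(p)` is `R_Q*`-closed. -/
theorem collapse_val_closed (S : QMS) (Sg : Set Formula) (hadm : Admissible Sg) :
    ∀ p : ℕ, ∀ i : S.W,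
      cls S Sg i ∈ CVal S Sg p ↔
        ∀ y : CW S Sg, CRQ S Sg (cls S Sg i) y →
          ∃ z : CW S Sg, CRQ S Sg y z ∧ z ∈ CVal S Sg p := by
  intro p i
  by_cases hp : Formula.atom p ∈ Sg
  · constructor
    · rintro ⟨-, i', hi', hival⟩ y ⟨i'', j, hi'', hj, hRQ⟩
      have hsim : Sim S Sg i'' i' := Quotient.exact (hi''.trans hi'.symm)
      have hi''val : i'' ∈ S.val p := (hsim (Formula.atom p) hp).mpr hival
      obtain ⟨k, hjk, hk⟩ := (S.val_closed p i'').mp hi''val j hRQ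
      exact ⟨cls S Sg k, ⟨j, k, hj, rfl, hjk⟩, hp, k, rfl, hk⟩
    · intro h
      refine ⟨hp, i, rfl, ?_⟩
      apply (S.val_closed p i).mpr
      intro j hij
      obtain ⟨z, ⟨j', k, hj', hk, hRQ⟩, -, k', hk', hkval⟩ :=
        h (cls S Sg j) ⟨i, j, rfl, rfl, hij⟩
      have hsimj : Sim S Sg j' j := Quotient.exact hj'
      have hsimk : Sim S Sg k k' := Quotient.exact (hk.trans hk'.symm)
      have hkvalk : k ∈ S.val p := (hsimk (Formula.atom p) hp).mpr hkval
      have hnp : Formula.neg (Formula.atom p) ∈ Sg := hadm.2.2.2 p hp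
      have h1 : ¬ Truth S j' (Formula.neg (Formula.atom p)) := fun hn => hn k hRQ hkvalk
      have h2 : ¬ Truth S j (Formula.neg (Formula.atom p)) :=
        fun hn => h1 ((hsimj _ hnp).mpr hn)
      simp only [Truth, TruthOn, not_forall, not_not] at h2
      obtain ⟨k₂, hjk₂, hk₂⟩ := h2
      exact ⟨k₂, hjk₂, hk₂⟩
  · constructor
    · rintro ⟨hp', -⟩; exact absurd hp' hp
    · intro h
      obtain ⟨z, -, hp', -⟩ := h (cls S Sg i) ⟨i, i, rfl, rfl, S.RQ_refl i⟩
      exact absurd hp' hp
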